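/- Let (A,B) and (A′,B′) be as in the type-one single column simulation with 4 ≤ K ≤ 8, let 0 ≤ ε < 1/(3n), and let (x*,y*) be an ε-WSNE of (A′,B′). Then for each column j < k of A, if P(rbʲ) > 0 and P(cb₁ʲ) ≥ 11ε, then P(cb₂ʲ) > 0 (i.e., y*_{3j+2} > 0). -/

import Mathlib

open Finset
open scoped Classical

/-- `(x, y)` is an `ε`-well-supported Nash equilibrium of the bimatrix game with
`nr` rows, `nc` columns and payoff matrices `A` (row player) and `B` (column player). -/
def IsWSNE (nr nc : ℕ) (A B : ℕ → ℕ → ℝ) (x y : ℕ → ℝ) (ε : ℝ) : Prop :=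
  (∀ i, 0 ≤ x i) ∧ (∀ i, nr ≤ i → x i = 0) ∧ (∑ i ∈ range nr, x i = 1) ∧
  (∀ j, 0 ≤ y j) ∧ (∀ j, nc ≤ j → y j = 0) ∧ (∑ j ∈ range nc, y j = 1) ∧
  (∀ i < nr, 0 < x i → ∀ i' < nr,
    ∑ j ∈ range nc, A i j * y j ≥ ∑ j ∈ range nc, A i' j * y j - ε) ∧
  (∀ j < nc, 0 < y j → ∀ j' < nc,
    ∑ i ∈ range nr, x i * B i j ≥ ∑ i ∈ range nr, x i * B i j' - ε)

/-- Input assumptions of the type-one single column simulation: `(A,B)` has at most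
`n` rows and columns (`nr` rows, `nc` columns), all entries in `[0,K]`, every row
and column of `A` and `B` has an entry `≥ 1`, the columns of `A` containing `K` are
exactly the columns `j < k`, each such column contains exactly one `K`, its other
non-zero entries lie in `{1,2}` and are either at most two values from `{1,2}` or
at most three `1`s. -/
def Scs1Input (n nr nc k : ℕ) (K : ℝ) (A B : ℕ → ℕ → ℝ) : Prop :=
  nr ≤ n ∧ nc ≤ n ∧ k ≤ nc ∧
  (∀ i < nr, ∀ j < nc, 0 ≤ A i j ∧ A i j ≤ K) ∧
  (∀ i < nr, ∀ j < nc, 0 ≤ B i j ∧ B i j ≤ K) ∧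
  (∀ i < nr, ∃ j < nc, 1 ≤ A i j) ∧ (∀ j < nc, ∃ i < nr, 1 ≤ A i j) ∧
  (∀ i < nr, ∃ j < nc, 1 ≤ B i j) ∧ (∀ j < nc, ∃ i < nr, 1 ≤ B i j) ∧
  (∀ j < k,
    ((range nr).filter fun i => A i j = K).card = 1 ∧
    (∀ i < nr, A i j = 0 ∨ A i j = 1 ∨ A i j = 2 ∨ A i j = K) ∧
    (((range nr).filter fun i => A i j = 1 ∨ A i j = 2).card ≤ 2 ∨
      (((range nr).filter fun i => A i j = 1).card ≤ 3 ∧ ∀ i < nr, A i j ≠ 2))) ∧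
  (∀ j, k ≤ j → j < nc → ∀ i < nr, A i j ≠ K)

/-- The row player's payoff matrix `A'` of the type-one single column simulation.
It has `2k + nr` rows and `2k + nc` columns.  For each `j < k`: the block
`(rbʲ, cb₁ʲ) = ({2j,2j+1}, {3j,3j+1})` equals `S = [[2,0],[0,1]]`, the block
`(rbʲ, cb₂ʲ) = ({2j,2j+1}, {3j+2})` is all ones, and the block `(rb_e, cb₁ʲ)`
equals `encode(A_j)` (each `1` of column `A_j` kept as a `1` in the first column,
each `2` replaced by a `1` in the second column, the `K` replaced by `K/2` in the
second column).  Columns `c ≥ 3k` restricted to `rb_e` equal the columns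
`A_{k}, …, A_{nc-1}`; all other entries are `0`. -/
noncomputable def scs1A (k : ℕ) (K : ℝ) (A : ℕ → ℕ → ℝ) : ℕ → ℕ → ℝ := fun r c =>
  if r < 2*k then
    if c = 3*(r/2) then (if r % 2 = 0 then 2 else 0)
    else if c = 3*(r/2) + 1 then (if r % 2 = 0 then 0 else 1)
    else if c = 3*(r/2) + 2 then 1
    else 0
  else
    if c < 3*k then
      (if c % 3 = 0 then (if A (r - 2*k) (c/3) = 1 then 1 else 0)
       else if c % 3 = 1 then
         (if A (r - 2*k) (c/3) = K then K/2
          else if A (r - 2*k) (c/3) = 2 then 1 else 0)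
       else 0)
    else A (r - 2*k) (c - 2*k)

/-- The column player's payoff matrix `B'` of the type-one single column
simulation: for `j < k` the block `(rbʲ, cb₁ʲ)` equals `T = [[0,1],[1,0]]` and the
block `(rb_e, cb₂ʲ)` equals column `B_j`; columns `c ≥ 3k` restricted to `rb_e`
equal the columns `B_k, …, B_{nc-1}`; all other entries are `0`. -/
noncomputable def scs1B (k : ℕ) (B : ℕ → ℕ → ℝ) : ℕ → ℕ → ℝ := fun r c =>
  if r < 2*k then
    if c = 3*(r/2) then (if r % 2 = 0 then 0 else 1)
    else if c = 3*(r/2) + 1 then (if r % 2 = 0 then 1 else 0)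
    else 0
  else
    if c < 3*k then (if c % 3 = 2 then B (r - 2*k) (c/3) else 0)
    else B (r - 2*k) (c - 2*k)

/-- The (un-normalized) translated column strategy `y'`: for `j < k`,
`y'_j = y*_{3j}` if `P(cb₁ʲ) ≥ 11ε` and `0` otherwise; for `j ≥ k`,
`y'_j = y*_{3k + (j-k)}`. -/
noncomputable def scs1Y (k : ℕ) (ε : ℝ) (ystar : ℕ → ℝ) : ℕ → ℝ := fun j =>
  if j < k then (if 11 * ε ≤ ystar (3*j) + ystar (3*j+1) then ystar (3*j) else 0)
  else ystar (2*k + j)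

/-!
Suppose `y*_{3j+2} = 0`. Every column of `A′` and every row of `B′` has an entry `≥ 1` and
both games have at most `3n` rows and columns, so every row in the support of `x*` earns at least
`1/(3n) - ε > 0`, and likewise every column in the support of `y*`. If row `2j+1` is in the
support, comparing it with row `2j` and with the encoding row carrying `K/2` in column `3j+1`
forces `y*_{3j}, y*_{3j+1} ≤ ε`, so `P(cb₁ʲ) ≥ 11ε` gives `ε ≤ 0` and row `2j+1` earns nothing.
Otherwise row `2j` is in the support, which makes `y*_{3j} > 0`; but column `3j` pays the column
player only `x*_{2j+1} = 0`.
-/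

section WellSupported

variable {nr nc : ℕ} {A B : ℕ → ℕ → ℝ} {x y : ℕ → ℝ} {ε : ℝ}

lemma exists_one_div_le_sum_mul (hA : ∀ i < nr, ∀ j < nc, 0 ≤ A i j) (hcol : ∀ j < nc, ∃ i < nr, 1 ≤ A i j)
    (hy0 : ∀ j, 0 ≤ y j) (hy1 : ∑ j ∈ range nc, y j = 1) :
    ∃ i < nr, 1 / (nr : ℝ) ≤ ∑ j ∈ range nc, A i j * y j := by
  have hnc : 0 < nc := Nat.pos_of_ne_zero fun h => by simp [h] at hy1
  obtain ⟨i, hi, -⟩ := hcol 0 hnc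
  have hnr : (0 : ℝ) < nr := by exact_mod_cast Nat.zero_lt_of_lt hi
  have hcolsum : ∀ j < nc, 1 ≤ ∑ i ∈ range nr, A i j := fun j hj => by
    obtain ⟨i, hi, h1⟩ := hcol j hj
    exact h1.trans (single_le_sum (fun i' hi' => hA i' (mem_range.1 hi') j hj) (mem_range.2 hi))
  have htotal : ∑ _i ∈ range nr, 1 / (nr : ℝ) ≤ ∑ i ∈ range nr, ∑ j ∈ range nc, A i j * y j :=
    calc ∑ _i ∈ range nr, 1 / (nr : ℝ) = ∑ j ∈ range nc, 1 * y j := by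
          simp only [one_mul]
          rw [sum_const, card_range, nsmul_eq_mul, mul_one_div_cancel hnr.ne', hy1]
      _ ≤ ∑ j ∈ range nc, (∑ i ∈ range nr, A i j) * y j :=
          sum_le_sum fun j hj => mul_le_mul_of_nonneg_right (hcolsum j (mem_range.1 hj)) (hy0 j)
      _ = ∑ i ∈ range nr, ∑ j ∈ range nc, A i j * y j := by
          simp only [sum_mul]; exact sum_comm
  obtain ⟨i, hi, h⟩ := exists_le_of_sum_le ⟨i, mem_range.2 hi⟩ htotal
  exact ⟨i, mem_range.1 hi, h⟩

lemma IsWSNE.swap (h : IsWSNE nr nc A B x y ε) :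
    IsWSNE nc nr (fun j i => B i j) (fun j i => A i j) y x ε := by
  obtain ⟨hx0, hxz, hx1, hy0, hyz, hy1, hrow, hcol⟩ := h
  refine ⟨hy0, hyz, hy1, hx0, hxz, hx1, ?_, ?_⟩
  · simpa only [mul_comm (x _)] using hcol
  · simpa only [mul_comm (y _)] using hrow

lemma IsWSNE.one_div_sub_le_row_payoff (h : IsWSNE nr nc A B x y ε)
    (hA : ∀ i < nr, ∀ j < nc, 0 ≤ A i j) (hcol : ∀ j < nc, ∃ i < nr, 1 ≤ A i j)
    {i : ℕ} (hi : i < nr) (hx : 0 < x i) :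
    1 / (nr : ℝ) - ε ≤ ∑ j ∈ range nc, A i j * y j := by
  obtain ⟨-, -, -, hy0, -, hy1, hbest, -⟩ := h
  obtain ⟨i', hi', hbig⟩ := exists_one_div_le_sum_mul hA hcol hy0 hy1
  linarith [hbest i hi hx i' hi']

lemma IsWSNE.one_div_sub_le_col_payoff (h : IsWSNE nr nc A B x y ε)
    (hB : ∀ i < nr, ∀ j < nc, 0 ≤ B i j) (hrow : ∀ i < nr, ∃ j < nc, 1 ≤ B i j)
    {j : ℕ} (hj : j < nc) (hy : 0 < y j) :
    1 / (nc : ℝ) - ε ≤ ∑ i ∈ range nr, x i * B i j := by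
  simpa only [mul_comm (x _)] using
    h.swap.one_div_sub_le_row_payoff (fun j hj i hi => hB i hi j hj) hrow hj hy

end WellSupported

section Simulation

variable {k nr nc j : ℕ} {K : ℝ} {A B : ℕ → ℕ → ℝ}

lemma scs1A_two_mul (hj : j < k) (c : ℕ) :
    scs1A k K A (2*j) c = (if c = 3*j then 2 else 0) + (if c = 3*j+2 then 1 else 0) := by
  simp only [scs1A, if_pos (show 2*j < 2*k by omega), show 2*j % 2 = 0 by omega,
    show 2*j / 2 = j by omega]
  split_ifs <;> first | omega | norm_num

lemma scs1A_two_mul_add_one (hj : j < k) (c : ℕ) :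
    scs1A k K A (2*j+1) c = (if c = 3*j+1 then 1 else 0) + (if c = 3*j+2 then 1 else 0) := by
  simp only [scs1A, if_pos (show 2*j+1 < 2*k by omega), show (2*j+1) % 2 = 1 by omega,
    show (2*j+1) / 2 = j by omega]
  split_ifs <;> first | contradiction | omega | norm_num

lemma scs1A_encoding_of_eq (hj : j < k) {i : ℕ} (hi : A i j = K) :
    scs1A k K A (2*k+i) (3*j+1) = K/2 := by
  simp only [scs1A, if_neg (show ¬ 2*k+i < 2*k by omega), if_pos (show 3*j+1 < 3*k by omega),
    if_neg (show ¬ (3*j+1) % 3 = 0 by omega), if_pos (show (3*j+1) % 3 = 1 by omega),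
    show (3*j+1) / 3 = j by omega, show 2*k+i - 2*k = i by omega, if_pos hi]

lemma scs1B_three_mul (hj : j < k) (r : ℕ) :
    scs1B k B r (3*j) = if r = 2*j+1 then 1 else 0 := by
  simp only [scs1B]
  split_ifs <;> first | rfl | omega

lemma scs1A_nonneg (hK : 0 ≤ K) (hA : ∀ i < nr, ∀ j < nc, 0 ≤ A i j) :
    ∀ r < 2*k+nr, ∀ c < 2*k+nc, 0 ≤ scs1A k K A r c := by
  intro r hr c hc
  simp only [scs1A]
  split_ifs <;> first | (exact hA _ (by omega) _ (by omega)) | positivity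

lemma scs1B_nonneg (hB : ∀ i < nr, ∀ j < nc, 0 ≤ B i j) (hk : k ≤ nc) :
    ∀ r < 2*k+nr, ∀ c < 2*k+nc, 0 ≤ scs1B k B r c := by
  intro r hr c hc
  simp only [scs1B]
  split_ifs <;> first | (exact hB _ (by omega) _ (by omega)) | positivity

lemma scs1A_exists_one_le (hcol : ∀ j < nc, ∃ i < nr, 1 ≤ A i j) :
    ∀ c < 2*k+nc, ∃ r < 2*k+nr, 1 ≤ scs1A k K A r c := by
  intro c hc
  by_cases hc3 : c < 3*k
  · have hj : c / 3 < k := by omega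
    obtain h | h : c % 3 = 1 ∨ c % 3 ≠ 1 := by omega
    · refine ⟨2*(c/3)+1, by omega, ?_⟩
      rw [scs1A_two_mul_add_one hj]
      split_ifs <;> first | omega | norm_num
    · refine ⟨2*(c/3), by omega, ?_⟩
      rw [scs1A_two_mul hj]
      split_ifs <;> first | omega | norm_num
  · obtain ⟨i, hi, h1⟩ := hcol (c - 2*k) (by omega)
    refine ⟨2*k+i, by omega, ?_⟩
    simpa only [scs1A, if_neg (show ¬ 2*k+i < 2*k by omega), if_neg hc3,
      show 2*k+i - 2*k = i by omega] using h1

lemma scs1B_exists_one_le (hrow : ∀ i < nr, ∃ j < nc, 1 ≤ B i j) (hk : k ≤ nc) :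
    ∀ r < 2*k+nr, ∃ c < 2*k+nc, 1 ≤ scs1B k B r c := by
  intro r hr
  by_cases hr2 : r < 2*k
  · obtain h | h : r % 2 = 0 ∨ r % 2 = 1 := by omega
    · refine ⟨3*(r/2)+1, by omega, ?_⟩
      simp only [scs1B, if_pos hr2]
      split_ifs <;> first | omega | norm_num
    · refine ⟨3*(r/2), by omega, ?_⟩
      simp only [scs1B, if_pos hr2]
      split_ifs <;> first | omega | norm_num
  · obtain ⟨j, hj, h1⟩ := hrow (r - 2*k) (by omega)
    by_cases hjk : j < k
    · refine ⟨3*j+2, by omega, ?_⟩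
      simpa only [scs1B, if_neg hr2, if_pos (show 3*j+2 < 3*k by omega),
        if_pos (show (3*j+2) % 3 = 2 by omega), show (3*j+2) / 3 = j by omega] using h1
    · refine ⟨2*k+j, by omega, ?_⟩
      simpa only [scs1B, if_neg hr2, if_neg (show ¬ 2*k+j < 3*k by omega),
        show 2*k+j - 2*k = j by omega] using h1

variable (y x : ℕ → ℝ)

lemma sum_scs1A_two_mul_mul (hj : j < k) (hk : k ≤ nc) :
    ∑ c ∈ range (2*k+nc), scs1A k K A (2*j) c * y c = 2 * y (3*j) + y (3*j+2) := by
  simp only [scs1A_two_mul hj, add_mul, ite_mul, zero_mul, one_mul, sum_add_distrib,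
    sum_ite_eq', mem_range, if_pos (show 3*j < 2*k+nc by omega),
    if_pos (show 3*j+2 < 2*k+nc by omega)]

lemma sum_scs1A_two_mul_add_one_mul (hj : j < k) (hk : k ≤ nc) :
    ∑ c ∈ range (2*k+nc), scs1A k K A (2*j+1) c * y c = y (3*j+1) + y (3*j+2) := by
  simp only [scs1A_two_mul_add_one hj, add_mul, ite_mul, zero_mul, one_mul, sum_add_distrib,
    sum_ite_eq', mem_range, if_pos (show 3*j+1 < 2*k+nc by omega),
    if_pos (show 3*j+2 < 2*k+nc by omega)]

lemma sum_mul_scs1B_three_mul (hj : j < k) :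
    ∑ r ∈ range (2*k+nr), x r * scs1B k B r (3*j) = x (2*j+1) := by
  simp only [scs1B_three_mul hj, mul_ite, mul_one, mul_zero, sum_ite_eq', mem_range,
    if_pos (show 2*j+1 < 2*k+nr by omega)]

lemma half_mul_le_sum_scs1A_encoding_mul (hK : 0 ≤ K) (hA : ∀ i < nr, ∀ j < nc, 0 ≤ A i j)
    (hk : k ≤ nc) (hj : j < k) {i : ℕ} (hi : i < nr) (hiK : A i j = K) (hy0 : ∀ c, 0 ≤ y c) :
    K/2 * y (3*j+1) ≤ ∑ c ∈ range (2*k+nc), scs1A k K A (2*k+i) c * y c := by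
  rw [← scs1A_encoding_of_eq hj hiK]
  exact single_le_sum (f := fun c => scs1A k K A (2*k+i) c * y c)
    (fun c hc => mul_nonneg (scs1A_nonneg hK hA _ (by omega) c (mem_range.1 hc)) (hy0 c))
    (mem_range.2 (by omega))

end Simulation

lemma one_div_three_mul_le_one_div {n k m : ℕ} (hk : k ≤ n) (hm : m ≤ n) (hpos : 0 < 2*k+m) :
    1 / (3 * (n:ℝ)) ≤ 1 / ((2*k+m : ℕ) : ℝ) :=
  one_div_le_one_div_of_le (by exact_mod_cast hpos) (by norm_cast; omega)

namespace Scs1Input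

variable {n nr nc k : ℕ} {K ε : ℝ} {A B : ℕ → ℕ → ℝ} {x y : ℕ → ℝ}

lemma exists_eq (hin : Scs1Input n nr nc k K A B) {j : ℕ} (hj : j < k) :
    ∃ i < nr, A i j = K := by
  obtain ⟨-, -, -, -, -, -, -, -, -, hKcol, -⟩ := hin
  obtain ⟨i, hi⟩ := card_pos.1 ((hKcol j hj).1.symm ▸ one_pos)
  exact ⟨i, mem_range.1 (mem_filter.1 hi).1, (mem_filter.1 hi).2⟩

lemma one_div_sub_le_row_payoff (hin : Scs1Input n nr nc k K A B) (hK : 0 ≤ K)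
    (h : IsWSNE (2*k+nr) (2*k+nc) (scs1A k K A) (scs1B k B) x y ε)
    {r : ℕ} (hr : r < 2*k+nr) (hx : 0 < x r) :
    1 / (3 * (n:ℝ)) - ε ≤ ∑ c ∈ range (2*k+nc), scs1A k K A r c * y c := by
  obtain ⟨hnr, hnc, hk, hAb, -, -, hAcol, -⟩ := hin
  have hsize := one_div_three_mul_le_one_div (hk.trans hnc) hnr (by omega)
  exact (sub_le_sub_right hsize ε).trans <| h.one_div_sub_le_row_payoff
    (scs1A_nonneg hK fun i hi j hj => (hAb i hi j hj).1) (scs1A_exists_one_le hAcol) hr hx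

lemma one_div_sub_le_col_payoff (hin : Scs1Input n nr nc k K A B)
    (h : IsWSNE (2*k+nr) (2*k+nc) (scs1A k K A) (scs1B k B) x y ε)
    {c : ℕ} (hc : c < 2*k+nc) (hy : 0 < y c) :
    1 / (3 * (n:ℝ)) - ε ≤ ∑ r ∈ range (2*k+nr), x r * scs1B k B r c := by
  obtain ⟨-, hnc, hk, -, hBb, -, -, hBrow, -⟩ := hin
  have hsize := one_div_three_mul_le_one_div (hk.trans hnc) hnc (by omega)
  exact (sub_le_sub_right hsize ε).trans <| h.one_div_sub_le_col_payoff
    (scs1B_nonneg (fun i hi j hj => (hBb i hi j hj).1) hk) (scs1B_exists_one_le hBrow hk) hc hy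

end Scs1Input

theorem stmt10_general (n nr nc k : ℕ) (K ε : ℝ) (A B : ℕ → ℕ → ℝ) (xstar ystar : ℕ → ℝ)
    (hK4 : 4 ≤ K)
    (hin : Scs1Input n nr nc k K A B)
    (hε : ε < 1 / (3 * (n:ℝ)))
    (hwsne : IsWSNE (2*k+nr) (2*k+nc) (scs1A k K A) (scs1B k B) xstar ystar ε) :
    ∀ j < k, 0 < xstar (2*j) + xstar (2*j+1) →
      11 * ε ≤ ystar (3*j) + ystar (3*j+1) → 0 < ystar (3*j+2) := by
  intro j hj hx hy
  obtain ⟨i, hi, hiK⟩ := hin.exists_eq hj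
  obtain ⟨-, -, hk, hAb, -⟩ := id hin
  obtain ⟨hx0, -, -, hy0, -, -, hbest, -⟩ := id hwsne
  by_contra! hy2
  replace hy2 : ystar (3*j+2) = 0 := le_antisymm hy2 (hy0 _)
  have heven := sum_scs1A_two_mul_mul (K := K) (A := A) ystar hj hk
  have hodd := sum_scs1A_two_mul_add_one_mul (K := K) (A := A) ystar hj hk
  rcases (hx0 (2*j+1)).lt_or_eq with hx1 | hx1
  · have hvsEncoding := hbest (2*j+1) (by omega) hx1 (2*k+i) (by omega)
    have hvsEven := hbest (2*j+1) (by omega) hx1 (2*j) (by omega)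
    have hpayoff := hin.one_div_sub_le_row_payoff (by linarith) hwsne (by omega) hx1
    have hencoding := half_mul_le_sum_scs1A_encoding_mul ystar (by linarith)
      (fun i hi j hj => (hAb i hi j hj).1) hk hj hi hiK hy0
    have hK2 : 2 * ystar (3*j+1) ≤ K/2 * ystar (3*j+1) :=
      mul_le_mul_of_nonneg_right (by linarith) (hy0 _)
    rw [hodd] at hvsEncoding hvsEven hpayoff
    rw [heven] at hvsEven
    linarith [hy0 (3*j)]
  · have hpayoff := hin.one_div_sub_le_row_payoff (by linarith) hwsne (r := 2*j) (by omega)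
      (by linarith)
    rw [heven, hy2] at hpayoff
    have hcolPayoff := hin.one_div_sub_le_col_payoff hwsne (c := 3*j) (by omega) (by linarith)
    rw [sum_mul_scs1B_three_mul xstar hj, ← hx1] at hcolPayoff
    linarith

/-- If `4 ≤ K ≤ 8`, `0 ≤ ε < 1/(3n)` and `(x*, y*)` is an `ε`-WSNE of `(A', B')`,
then for every column `j < k` of `A`: if `P(rbʲ) > 0` and `P(cb₁ʲ) ≥ 11ε`, then
`P(cb₂ʲ) > 0`, i.e. `y*_{3j+2} > 0`. -/
theorem stmt10 (n nr nc k : ℕ) (K ε : ℝ) (A B : ℕ → ℕ → ℝ) (xstar ystar : ℕ → ℝ)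
    (hK4 : 4 ≤ K) (hK8 : K ≤ 8)
    (hin : Scs1Input n nr nc k K A B)
    (hε0 : 0 ≤ ε) (hε : ε < 1 / (3 * (n:ℝ)))
    (hwsne : IsWSNE (2*k+nr) (2*k+nc) (scs1A k K A) (scs1B k B) xstar ystar ε) :
    ∀ j < k, 0 < xstar (2*j) + xstar (2*j+1) →
      11 * ε ≤ ystar (3*j) + ystar (3*j+1) → 0 < ystar (3*j+2) :=
  stmt10_general n nr nc k K ε A B xstar ystar hK4 hin hε hwsne
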